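/- arXiv:1406.7612 — 2 statements merged into one kernel-verified Lean document; each statement's English description precedes it below -/
import Mathlib

section
/- (Symmetric Hamiltonian case.) Assume λ_{1,0} = λ_{2,0} = λ_{4,0} = λ_{5,0} = 0 and λ_{3,0} ≠ λ_{6,0}. Then v̄_{1,1} = λ_{1,1}, v̄_{3,1} = (λ_{3,0} − λ_{6,0}) λ_{5,1}, and v̄_{5,1} = v̄_{7,1} = 0. If moreover λ_{1,1} = λ_{5,1} = 0, then v̄_{1,2} = λ_{1,2}, v̄_{3,2} = (λ_{3,0} − λ_{6,0}) λ_{5,2}, v̄_{5,2} = 5(λ_{3,0} − λ_{6,0})² λ_{2,1} λ_{4,1}, and v̄_{7,2} = (λ_{3,0} − λ_{6,0})²(λ_{3,0}λ_{6,0}−2λ_{6,0}²) λ_{2,1} λ_{4,1}. Furthermore, for every integer k ≥ 2, if v̄_{5,j} = 0 for all 0 ≤ j ≤ k−1, then there exists an index i with 1 ≤ i ≤ k−1 such that v̄_{5,k} = 5(λ_{3,0} − λ_{6,0})² λ_{2,i} λ_{4,k−i} and v̄_{7,k} = (λ_{3,0} − λ_{6,0})²(λ_{3,0}λ_{6,0}−2λ_{6,0}²)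 λ_{2,i} λ_{4,k−i}. -/
/-!
Both `v₅` and `v₇` are `λ₂λ₄` times a cofactor `c`, with `c(0) = 5(λ₃,₀ - λ₆,₀)²` resp.
`(λ₃,₀ - λ₆,₀)²(λ₃,₀λ₆,₀ - 2λ₆,₀²)`. The cofactor of `v₅` is a unit, so `X ^ k ∣ v₅` forces
`X ^ k ∣ λ₂λ₄`, and then the `k`-th coefficient of `λ₂λ₄ c` is `c(0)` times that of `λ₂λ₄`.
If `λ₂`, `λ₄` have orders `a, b ≥ 1`, then `a + b ≥ k`, and the `k`-th coefficient of `λ₂λ₄` is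
`coeff a λ₂ * coeff b λ₄` when `a + b = k`; when `a + b > k` it is
`0 = coeff i λ₂ * coeff (k - i) λ₄` for `i = min a (k - 1)`.
For `k = 2` this applies unconditionally, since `X ^ 2 ∣ λ₂λ₄`.
-/

open PowerSeries

namespace PowerSeries

variable {R : Type*} [CommSemiring R]

theorem coeff_add_mul_of_X_pow_dvd {a b : ℕ} {f g : R⟦X⟧} (hf : X ^ a ∣ f) (hg : X ^ b ∣ g) :
    coeff (a + b) (f * g) = coeff a f * coeff b g := by
  obtain ⟨F, rfl⟩ := hf
  obtain ⟨G, rfl⟩ := hg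
  have hprod : X ^ a * F * (X ^ b * G) = X ^ (a + b) * (F * G) := by ring
  rw [hprod, coeff_X_pow_mul', if_pos le_rfl, coeff_X_pow_mul', if_pos le_rfl,
    coeff_X_pow_mul', if_pos le_rfl]
  simp only [Nat.sub_self, coeff_zero_eq_constantCoeff_apply, map_mul]

theorem coeff_mul_of_X_pow_dvd {k : ℕ} {f : R⟦X⟧} (hf : X ^ k ∣ f) (g : R⟦X⟧) :
    coeff k (f * g) = coeff k f * coeff 0 g := by
  simpa using coeff_add_mul_of_X_pow_dvd (b := 0) hf (by simp)

variable [NoZeroDivisors R]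

theorem exists_coeff_mul_eq_of_X_pow_dvd_mul {k : ℕ} {f g : R⟦X⟧} (hf : X ∣ f) (hg : X ∣ g)
    (hk : 2 ≤ k) (h : X ^ k ∣ f * g) :
    ∃ i, 1 ≤ i ∧ i ≤ k - 1 ∧ coeff k (f * g) = coeff i f * coeff (k - i) g := by
  by_cases! hfg : f = 0 ∨ g = 0
  · refine ⟨1, le_rfl, by omega, ?_⟩
    rcases hfg with rfl | rfl <;> simp
  set a := f.order.toNat
  set b := g.order.toNat
  have hfa : X ^ a ∣ f := X_pow_order_dvd
  have hgb : X ^ b ∣ g := X_pow_order_dvd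
  have hab : coeff (a + b) (f * g) ≠ 0 := by
    rw [coeff_add_mul_of_X_pow_dvd hfa hgb]
    exact mul_ne_zero (coeff_order hfg.1) (coeff_order hfg.2)
  have ha : a ≠ 0 := fun ha ↦ by
    simpa [a, ha, X_dvd_iff.mp hf] using coeff_order hfg.1
  have hb : b ≠ 0 := fun hb ↦ by
    simpa [b, hb, X_dvd_iff.mp hg] using coeff_order hfg.2
  have hkab : k ≤ a + b := by
    by_contra! hlt
    exact hab (X_pow_dvd_iff.mp h _ hlt)
  rcases hkab.eq_or_lt with rfl | hlt
  · exact ⟨a, by omega, by omega, by rw [coeff_add_mul_of_X_pow_dvd hfa hgb, Nat.add_sub_cancel_left]⟩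
  · have hzero : coeff k (f * g) = 0 :=
      X_pow_dvd_iff.mp (pow_add (X : R⟦X⟧) a b ▸ mul_dvd_mul hfa hgb) k hlt
    refine ⟨min a (k - 1), by omega, min_le_right _ _, ?_⟩
    rw [hzero]
    rcases le_or_gt a (k - 1) with hle | hgt
    · rw [min_eq_left hle, X_pow_dvd_iff.mp hgb (k - a) (by omega), mul_zero]
    · rw [min_eq_right hgt.le, X_pow_dvd_iff.mp hfa (k - 1) hgt, zero_mul]

theorem exists_coeff_mul_mul_eq_of_X_pow_dvd {k : ℕ} {f g u : R⟦X⟧} (hf : X ∣ f) (hg : X ∣ g)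
    (hu : IsUnit u) (hk : 2 ≤ k) (h : X ^ k ∣ f * g * u) :
    ∃ i, 1 ≤ i ∧ i ≤ k - 1 ∧
      ∀ w, coeff k (f * g * w) = coeff i f * coeff (k - i) g * coeff 0 w := by
  have hfg : X ^ k ∣ f * g := hu.dvd_mul_right.mp h
  obtain ⟨i, hi1, hik, hcoeff⟩ := exists_coeff_mul_eq_of_X_pow_dvd_mul hf hg hk hfg
  exact ⟨i, hi1, hik, fun w ↦ by rw [coeff_mul_of_X_pow_dvd hfg, hcoeff]⟩

end PowerSeries

theorem symmetric_hamiltonian_general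
    (l1 l2 l3 l4 l5 l6 : PowerSeries ℝ)
    (v1 v3 v5 v7 : PowerSeries ℝ)
    (hv1 : v1 = l1)
    (hv3 : v3 = l5 * (l3 - l6))
    (hv5 : v5 = l2 * l4 * (l3 - l6) * (l4 + 5 * l3 - 5 * l6))
    (hv7 : v7 = l2 * l4 * (l3 - l6) ^ 2 * (l3 * l6 - 2 * l6 ^ 2 - l2 ^ 2))
    (h20 : coeff 0 l2 = 0)
    (h40 : coeff 0 l4 = 0)
    (h50 : coeff 0 l5 = 0)
    (h36 : coeff 0 l3 ≠ coeff 0 l6) :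
    coeff 1 v1 = coeff 1 l1 ∧
    coeff 1 v3 = (coeff 0 l3 - coeff 0 l6) * coeff 1 l5 ∧
    coeff 1 v5 = 0 ∧ coeff 1 v7 = 0 ∧
    (coeff 1 l1 = 0 → coeff 1 l5 = 0 →
      coeff 2 v1 = coeff 2 l1 ∧
      coeff 2 v3 = (coeff 0 l3 - coeff 0 l6) * coeff 2 l5 ∧
      coeff 2 v5 = 5 * (coeff 0 l3 - coeff 0 l6) ^ 2 * coeff 1 l2 * coeff 1 l4 ∧
      coeff 2 v7 = (coeff 0 l3 - coeff 0 l6) ^ 2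
        * (coeff 0 l3 * coeff 0 l6 - 2 * (coeff 0 l6) ^ 2) * coeff 1 l2 * coeff 1 l4) ∧
    (∀ k : ℕ, 2 ≤ k → (∀ j < k, coeff j v5 = 0) →
      ∃ i : ℕ, 1 ≤ i ∧ i ≤ k - 1 ∧
        coeff k v5 = 5 * (coeff 0 l3 - coeff 0 l6) ^ 2 * coeff i l2 * coeff (k - i) l4 ∧
        coeff k v7 = (coeff 0 l3 - coeff 0 l6) ^ 2
          * (coeff 0 l3 * coeff 0 l6 - 2 * (coeff 0 l6) ^ 2) * coeff i l2 * coeff (k - i) l4) := by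
  simp only [coeff_zero_eq_constantCoeff_apply] at h20 h40 h50 h36
  have hX2 : X ∣ l2 := X_dvd_iff.mpr h20
  have hX4 : X ∣ l4 := X_dvd_iff.mpr h40
  have hv5' : v5 = l2 * l4 * ((l3 - l6) * (l4 + 5 * l3 - 5 * l6)) := by rw [hv5]; ring
  have hv7' : v7 = l2 * l4 * ((l3 - l6) ^ 2 * (l3 * l6 - 2 * l6 ^ 2 - l2 ^ 2)) := by
    rw [hv7]; ring
  have hunit : IsUnit ((l3 - l6) * (l4 + 5 * l3 - 5 * l6)) := by
    rw [isUnit_iff_constantCoeff, isUnit_iff_ne_zero]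
    simp only [map_mul, map_sub, map_add, map_ofNat, h40, zero_add, ← mul_sub]
    exact mul_ne_zero (sub_ne_zero.mpr h36) (mul_ne_zero (by norm_num) (sub_ne_zero.mpr h36))
  have general : ∀ k, 2 ≤ k → X ^ k ∣ v5 → ∃ i : ℕ, 1 ≤ i ∧ i ≤ k - 1 ∧
      coeff k v5 = 5 * (coeff 0 l3 - coeff 0 l6) ^ 2 * coeff i l2 * coeff (k - i) l4 ∧
      coeff k v7 = (coeff 0 l3 - coeff 0 l6) ^ 2
        * (coeff 0 l3 * coeff 0 l6 - 2 * (coeff 0 l6) ^ 2) * coeff i l2 * coeff (k - i) l4 := by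
    intro k hk hk5
    obtain ⟨i, hi1, hik, hcoeff⟩ :=
      exists_coeff_mul_mul_eq_of_X_pow_dvd hX2 hX4 hunit hk (hv5' ▸ hk5)
    refine ⟨i, hi1, hik, ?_, ?_⟩ <;>
      simp only [hv5', hv7', hcoeff, coeff_zero_eq_constantCoeff_apply, map_mul, map_sub, map_add,
        map_pow, map_ofNat, h20, h40] <;> ring
  have hP2 : X ^ 2 ∣ l2 * l4 := sq (X : ℝ⟦X⟧) ▸ mul_dvd_mul hX2 hX4
  have h5_2 : X ^ 2 ∣ v5 := hv5' ▸ dvd_mul_of_dvd_left hP2 _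
  have h7_2 : X ^ 2 ∣ v7 := hv7' ▸ dvd_mul_of_dvd_left hP2 _
  have hv3_coeff : ∀ k, X ^ k ∣ l5 → coeff k v3 = (coeff 0 l3 - coeff 0 l6) * coeff k l5 :=
    fun k hk ↦ by rw [hv3, coeff_mul_of_X_pow_dvd hk, map_sub, mul_comm]
  refine ⟨by rw [hv1], hv3_coeff 1 (by rwa [pow_one, X_dvd_iff]),
    X_pow_dvd_iff.mp h5_2 1 one_lt_two, X_pow_dvd_iff.mp h7_2 1 one_lt_two, fun _ h51 ↦ ?_,
    fun k hk hk5 ↦ general k hk (X_pow_dvd_iff.mpr hk5)⟩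
  obtain ⟨i, hi1, hi, h5, h7⟩ := general 2 le_rfl h5_2
  obtain rfl : i = 1 := by omega
  have hX5 : X ^ 2 ∣ l5 := X_pow_dvd_iff.mpr fun m hm ↦ by
    interval_cases m
    · rwa [coeff_zero_eq_constantCoeff_apply]
    · exact h51
  exact ⟨by rw [hv1], hv3_coeff 2 hX5, h5, h7⟩

/-- Symmetric Hamiltonian case. -/
theorem symmetric_hamiltonian
    (l1 l2 l3 l4 l5 l6 : PowerSeries ℝ)
    (v1 v3 v5 v7 : PowerSeries ℝ)
    (hv1 : v1 = l1)
    (hv3 : v3 = l5 * (l3 - l6))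
    (hv5 : v5 = l2 * l4 * (l3 - l6) * (l4 + 5 * l3 - 5 * l6))
    (hv7 : v7 = l2 * l4 * (l3 - l6) ^ 2 * (l3 * l6 - 2 * l6 ^ 2 - l2 ^ 2))
    (h10 : coeff 0 l1 = 0)
    (h20 : coeff 0 l2 = 0)
    (h40 : coeff 0 l4 = 0)
    (h50 : coeff 0 l5 = 0)
    (h36 : coeff 0 l3 ≠ coeff 0 l6) :
    coeff 1 v1 = coeff 1 l1 ∧
    coeff 1 v3 = (coeff 0 l3 - coeff 0 l6) * coeff 1 l5 ∧
    coeff 1 v5 = 0 ∧ coeff 1 v7 = 0 ∧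
    (coeff 1 l1 = 0 → coeff 1 l5 = 0 →
      coeff 2 v1 = coeff 2 l1 ∧
      coeff 2 v3 = (coeff 0 l3 - coeff 0 l6) * coeff 2 l5 ∧
      coeff 2 v5 = 5 * (coeff 0 l3 - coeff 0 l6) ^ 2 * coeff 1 l2 * coeff 1 l4 ∧
      coeff 2 v7 = (coeff 0 l3 - coeff 0 l6) ^ 2
        * (coeff 0 l3 * coeff 0 l6 - 2 * (coeff 0 l6) ^ 2) * coeff 1 l2 * coeff 1 l4) ∧
    (∀ k : ℕ, 2 ≤ k → (∀ j < k, coeff j v5 = 0) →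
      ∃ i : ℕ, 1 ≤ i ∧ i ≤ k - 1 ∧
        coeff k v5 = 5 * (coeff 0 l3 - coeff 0 l6) ^ 2 * coeff i l2 * coeff (k - i) l4 ∧
        coeff k v7 = (coeff 0 l3 - coeff 0 l6) ^ 2
          * (coeff 0 l3 * coeff 0 l6 - 2 * (coeff 0 l6) ^ 2) * coeff i l2 * coeff (k - i) l4) :=
  symmetric_hamiltonian_general l1 l2 l3 l4 l5 l6 v1 v3 v5 v7 hv1 hv3 hv5 hv7 h20 h40 h50 h36
end

section
/- (Linear center case.) Assume λ_{i,0} = 0 for all i = 1,…,6, and moreover λ_{1,j} = 0 for 1 ≤ j ≤ 5, λ_{5,j} = 0 for 1 ≤ j ≤ 4, λ_{4,1} = 5(λ_{6,1} − λ_{3,1}), λ_{4,2} = 5(λ_{6,2} − λ_{3,2}), λ_{3,1} ≠ λ_{6,1} and λ_{2,1} ≠ 0. Then v̄_{1,j} = v̄_{3,j} = v̄_{5,j} = v̄_{7,j} = 0 for all 1 ≤ j ≤ 5, and v̄_{1,6} = λ_{1,6}, v̄_{3,6} = (λ_{3,1} − λ_{6,1}) λ_{5,5}, v̄_{5,6}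 = λ_{2,1} λ_{4,1}(λ_{3,1} − λ_{6,1})(λ_{4,3}+5λ_{3,3}−5λ_{6,3}), and v̄_{7,6} = λ_{2,1} λ_{4,1}(λ_{3,1} − λ_{6,1})²(λ_{3,1}λ_{6,1} − 2λ_{6,1}² − λ_{2,1}²). -/
/-!
Every λᵢ vanishes at ε = 0, so λᵢ = ε μᵢ, while the hypotheses make λ₅ divisible by ε⁵ and
λ₄ + 5λ₃ − 5λ₆ divisible by ε³. Hence each of v₃, v₅, v₇ is ε⁶ times a power series, whose
constant term, the product of the leading coefficients of the factors, is the coefficient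
of ε⁶; all lower coefficients vanish.
-/

open PowerSeries

namespace PowerSeries

variable {R : Type*} [Semiring R]

theorem coeff_ofNat_mul (k : ℕ) [k.AtLeastTwo] (f : R⟦X⟧) (n : ℕ) :
    coeff n ((no_index (OfNat.ofNat k) : R⟦X⟧) * f) = OfNat.ofNat k * coeff n f := by
  rw [← map_ofNat C k, coeff_C_mul]

theorem coeff_X_pow_mul_self (g : R⟦X⟧) (n : ℕ) : coeff n (X ^ n * g) = constantCoeff g := by
  simpa using coeff_X_pow_mul g n 0

theorem exists_eq_X_pow_mul_of_coeff_eq_zero {f : R⟦X⟧} {n : ℕ}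
    (h : ∀ i < n, coeff i f = 0) : ∃ g, f = X ^ n * g ∧ constantCoeff g = coeff n f := by
  obtain ⟨g, rfl⟩ := X_pow_dvd_iff.mpr h
  exact ⟨g, rfl, (coeff_X_pow_mul_self g n).symm⟩

theorem exists_eq_X_mul_of_coeff_zero_eq_zero {f : R⟦X⟧} (h : coeff 0 f = 0) :
    ∃ g, f = X * g ∧ constantCoeff g = coeff 1 f := by
  simpa using exists_eq_X_pow_mul_of_coeff_eq_zero (n := 1) (by simpa using h)

theorem coeff_eq_zero_of_eq_X_pow_mul {f g : R⟦X⟧} {n j : ℕ} (h : f = X ^ n * g) (hj : j < n) :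
    coeff j f = 0 := by
  rw [h, coeff_X_pow_mul', if_neg hj.not_ge]

end PowerSeries

theorem linear_center_quadratic_general
    (l1 l2 l3 l4 l5 l6 : PowerSeries ℝ)
    (v1 v3 v5 v7 : PowerSeries ℝ)
    (hv1 : v1 = l1)
    (hv3 : v3 = l5 * (l3 - l6))
    (hv5 : v5 = l2 * l4 * (l3 - l6) * (l4 + 5 * l3 - 5 * l6))
    (hv7 : v7 = l2 * l4 * (l3 - l6) ^ 2 * (l3 * l6 - 2 * l6 ^ 2 - l2 ^ 2))
    (h20 : coeff 0 l2 = 0)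
    (h30 : coeff 0 l3 = 0)
    (h40 : coeff 0 l4 = 0)
    (h50 : coeff 0 l5 = 0)
    (h60 : coeff 0 l6 = 0)
    (hl1 : ∀ j : ℕ, 1 ≤ j → j ≤ 5 → coeff j l1 = 0)
    (hl5 : ∀ j : ℕ, 1 ≤ j → j ≤ 4 → coeff j l5 = 0)
    (hl41 : coeff 1 l4 = 5 * (coeff 1 l6 - coeff 1 l3))
    (hl42 : coeff 2 l4 = 5 * (coeff 2 l6 - coeff 2 l3)) :
    (∀ j : ℕ, 1 ≤ j → j ≤ 5 →
      coeff j v1 = 0 ∧ coeff j v3 = 0 ∧ coeff j v5 = 0 ∧ coeff j v7 = 0) ∧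
    coeff 6 v1 = coeff 6 l1 ∧
    coeff 6 v3 = (coeff 1 l3 - coeff 1 l6) * coeff 5 l5 ∧
    coeff 6 v5 = coeff 1 l2 * coeff 1 l4 * (coeff 1 l3 - coeff 1 l6)
      * (coeff 3 l4 + 5 * coeff 3 l3 - 5 * coeff 3 l6) ∧
    coeff 6 v7 = coeff 1 l2 * coeff 1 l4 * (coeff 1 l3 - coeff 1 l6) ^ 2
      * (coeff 1 l3 * coeff 1 l6 - 2 * (coeff 1 l6) ^ 2 - (coeff 1 l2) ^ 2) := by
  obtain ⟨m2, hm2, hc2⟩ := exists_eq_X_mul_of_coeff_zero_eq_zero h20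
  obtain ⟨m3, hm3, hc3⟩ := exists_eq_X_mul_of_coeff_zero_eq_zero h30
  obtain ⟨m4, hm4, hc4⟩ := exists_eq_X_mul_of_coeff_zero_eq_zero h40
  obtain ⟨m6, hm6, hc6⟩ := exists_eq_X_mul_of_coeff_zero_eq_zero h60
  obtain ⟨m5, hm5, hc5⟩ := exists_eq_X_pow_mul_of_coeff_eq_zero (f := l5) (n := 5) fun i hi => by
    rcases i.eq_zero_or_pos with rfl | hi0
    exacts [h50, hl5 i hi0 (by omega)]
  have coeff_comb (j : ℕ) : coeff j (l4 + 5 * l3 - 5 * l6) =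
      coeff j l4 + 5 * coeff j l3 - 5 * coeff j l6 := by
    simp only [map_add, map_sub, coeff_ofNat_mul]
  obtain ⟨d, hd, hcd⟩ := exists_eq_X_pow_mul_of_coeff_eq_zero
      (f := l4 + 5 * l3 - 5 * l6) (n := 3) fun i hi => by
    interval_cases i <;> rw [coeff_comb] <;> linarith
  have hv3X : v3 = X ^ 6 * ((m3 - m6) * m5) := by rw [hv3, hm3, hm5, hm6]; ring
  have hv5X : v5 = X ^ 6 * (m2 * m4 * (m3 - m6) * d) := by
    rw [hv5, hd, hm2, hm3, hm4, hm6]; ring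
  have hv7X : v7 = X ^ 6 * (m2 * m4 * (m3 - m6) ^ 2 * (m3 * m6 - 2 * m6 ^ 2 - m2 ^ 2)) := by
    rw [hv7, hm2, hm3, hm4, hm6]; ring
  refine ⟨fun j hj1 hj5 => ⟨hv1 ▸ hl1 j hj1 hj5, coeff_eq_zero_of_eq_X_pow_mul hv3X (by omega),
    coeff_eq_zero_of_eq_X_pow_mul hv5X (by omega), coeff_eq_zero_of_eq_X_pow_mul hv7X (by omega)⟩,
    by rw [hv1], ?_, ?_, ?_⟩
  · rw [hv3X, coeff_X_pow_mul_self, map_mul, map_sub, hc3, hc5, hc6]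
  · rw [hv5X, coeff_X_pow_mul_self, ← coeff_comb]
    simp only [map_mul, map_sub, hc2, hc3, hc4, hc6, hcd]
  · rw [hv7X, coeff_X_pow_mul_self]
    simp only [map_mul, map_sub, map_pow, map_ofNat, hc2, hc3, hc4, hc6]

/-- Linear center case (quadratic perturbations, essential order 6). -/
theorem linear_center_quadratic
    (l1 l2 l3 l4 l5 l6 : PowerSeries ℝ)
    (v1 v3 v5 v7 : PowerSeries ℝ)
    (hv1 : v1 = l1)
    (hv3 : v3 = l5 * (l3 - l6))
    (hv5 : v5 = l2 * l4 * (l3 - l6) * (l4 + 5 * l3 - 5 * l6))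
    (hv7 : v7 = l2 * l4 * (l3 - l6) ^ 2 * (l3 * l6 - 2 * l6 ^ 2 - l2 ^ 2))
    (h10 : coeff 0 l1 = 0)
    (h20 : coeff 0 l2 = 0)
    (h30 : coeff 0 l3 = 0)
    (h40 : coeff 0 l4 = 0)
    (h50 : coeff 0 l5 = 0)
    (h60 : coeff 0 l6 = 0)
    (hl1 : ∀ j : ℕ, 1 ≤ j → j ≤ 5 → coeff j l1 = 0)
    (hl5 : ∀ j : ℕ, 1 ≤ j → j ≤ 4 → coeff j l5 = 0)
    (hl41 : coeff 1 l4 = 5 * (coeff 1 l6 - coeff 1 l3))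
    (hl42 : coeff 2 l4 = 5 * (coeff 2 l6 - coeff 2 l3))
    (h36 : coeff 1 l3 ≠ coeff 1 l6)
    (h21 : coeff 1 l2 ≠ 0) :
    (∀ j : ℕ, 1 ≤ j → j ≤ 5 →
      coeff j v1 = 0 ∧ coeff j v3 = 0 ∧ coeff j v5 = 0 ∧ coeff j v7 = 0) ∧
    coeff 6 v1 = coeff 6 l1 ∧
    coeff 6 v3 = (coeff 1 l3 - coeff 1 l6) * coeff 5 l5 ∧
    coeff 6 v5 = coeff 1 l2 * coeff 1 l4 * (coeff 1 l3 - coeff 1 l6)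
      * (coeff 3 l4 + 5 * coeff 3 l3 - 5 * coeff 3 l6) ∧
    coeff 6 v7 = coeff 1 l2 * coeff 1 l4 * (coeff 1 l3 - coeff 1 l6) ^ 2
      * (coeff 1 l3 * coeff 1 l6 - 2 * (coeff 1 l6) ^ 2 - (coeff 1 l2) ^ 2) :=
  linear_center_quadratic_general l1 l2 l3 l4 l5 l6 v1 v3 v5 v7 hv1 hv3 hv5 hv7 h20 h30 h40 h50 h60
    hl1 hl5 hl41 hl42
end
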